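/- The sets σ_{π+}(A), σ_{π−}(A), σ_{++}(A) and σ_{−−}(A) are relatively open subsets of the extended approximate point spectrum σ̃_ap(A) (with respect to the topology of the Riemann sphere ℂ̄). -/

import Mathlib

open Filter Topology OnePoint Set

noncomputable section

namespace Paper

variable {H : Type*} [NormedAddCommGroup H] [InnerProductSpace ℂ H]

/-- The indefinite inner product `[x,y] := (Gx, y)` induced by the Gram operator `G`. -/
def brk (G : H →L[ℂ] H) (x y : H) : ℂ := inner ℂ (G x) y

/-- The real part of `[x,y]`; note that `[x,x]` is real when `G` is selfadjoint. -/
def brkRe (G : H →L[ℂ] H) (x y : H) : ℝ := (brk G x y).re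

/-- A linear manifold of finite codimension in `H`. -/
def FinCodim (M : Submodule ℂ H) : Prop := FiniteDimensional ℂ (H ⧸ M)

/-- An approximate eigensequence of `A` at the finite point `l`. -/
def IsApproxSeq (A : H →ₗ.[ℂ] H) (l : ℂ) (x : ℕ → A.domain) : Prop :=
  (∀ n, ‖(x n : H)‖ = 1) ∧
    Tendsto (fun n => A (x n) - l • ((x n : H))) atTop (𝓝 0)

/-- The approximate point spectrum of `A`. -/
def sigmaAp (A : H →ₗ.[ℂ] H) : Set ℂ := {l | ∃ x : ℕ → A.domain, IsApproxSeq A l x}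

/-- The type `π₊` condition at `l` relative to the linear manifold `M`. -/
def PiPlusCond (G : H →L[ℂ] H) (A : H →ₗ.[ℂ] H) (l : ℂ) (M : Submodule ℂ H) : Prop :=
  ∀ x : ℕ → A.domain, (∀ n, (x n : H) ∈ M) → IsApproxSeq A l x →
    0 < atTop.liminf (fun n => brkRe G (x n) (x n))

/-- The type `π₋` condition at `l` relative to the linear manifold `M`. -/
def PiMinusCond (G : H →L[ℂ] H) (A : H →ₗ.[ℂ] H) (l : ℂ) (M : Submodule ℂ H) : Prop :=
  ∀ x : ℕ → A.domain, (∀ n, (x n : H) ∈ M) → IsApproxSeq A l x →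
    atTop.limsup (fun n => brkRe G (x n) (x n)) < 0

/-- `l` is a spectral point of type `π₊` of `A`. -/
def sigmaPiPlusAt (G : H →L[ℂ] H) (A : H →ₗ.[ℂ] H) (l : ℂ) : Prop :=
  l ∈ sigmaAp A ∧ ∃ M : Submodule ℂ H, FinCodim M ∧ PiPlusCond G A l M

/-- `l` is a spectral point of type `π₋` of `A`. -/
def sigmaPiMinusAt (G : H →L[ℂ] H) (A : H →ₗ.[ℂ] H) (l : ℂ) : Prop :=
  l ∈ sigmaAp A ∧ ∃ M : Submodule ℂ H, FinCodim M ∧ PiMinusCond G A l M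

/-- `l` is a spectral point of positive type of `A`. -/
def sigmaPPAt (G : H →L[ℂ] H) (A : H →ₗ.[ℂ] H) (l : ℂ) : Prop :=
  l ∈ sigmaAp A ∧ PiPlusCond G A l ⊤

/-- `l` is a spectral point of negative type of `A`. -/
def sigmaMMAt (G : H →L[ℂ] H) (A : H →ₗ.[ℂ] H) (l : ℂ) : Prop :=
  l ∈ sigmaAp A ∧ PiMinusCond G A l ⊤

/-- An approximate eigensequence of `A` at `∞`. -/
def IsInftyApproxSeq (A : H →ₗ.[ℂ] H) (x : ℕ → A.domain) : Prop :=
  (∀ n, ‖A (x n)‖ = 1) ∧ Tendsto (fun n => ((x n : H))) atTop (𝓝 0)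

/-- `A` is a bounded operator. -/
def IsBoundedOp (A : H →ₗ.[ℂ] H) : Prop := ∃ C : ℝ, ∀ x : A.domain, ‖A x‖ ≤ C * ‖(x : H)‖

/-- The type `π₊` condition at `∞` relative to the linear manifold `M`. -/
def InftyPiPlusCond (G : H →L[ℂ] H) (A : H →ₗ.[ℂ] H) (M : Submodule ℂ H) : Prop :=
  ∀ x : ℕ → A.domain, (∀ n, (x n : H) ∈ M) → IsInftyApproxSeq A x →
    0 < atTop.liminf (fun n => brkRe G (A (x n)) (A (x n)))

/-- The type `π₋` condition at `∞` relative to the linear manifold `M`. -/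
def InftyPiMinusCond (G : H →L[ℂ] H) (A : H →ₗ.[ℂ] H) (M : Submodule ℂ H) : Prop :=
  ∀ x : ℕ → A.domain, (∀ n, (x n : H) ∈ M) → IsInftyApproxSeq A x →
    atTop.limsup (fun n => brkRe G (A (x n)) (A (x n))) < 0

/-- `∞` is a spectral point of type `π₊` of `A`. -/
def sigmaPiPlusInfty (G : H →L[ℂ] H) (A : H →ₗ.[ℂ] H) : Prop :=
  ¬ IsBoundedOp A ∧ ∃ M : Submodule ℂ H, FinCodim M ∧ InftyPiPlusCond G A M

/-- `∞` is a spectral point of type `π₋` of `A`. -/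
def sigmaPiMinusInfty (G : H →L[ℂ] H) (A : H →ₗ.[ℂ] H) : Prop :=
  ¬ IsBoundedOp A ∧ ∃ M : Submodule ℂ H, FinCodim M ∧ InftyPiMinusCond G A M

/-- `∞` is a spectral point of positive type of `A`. -/
def sigmaPPInfty (G : H →L[ℂ] H) (A : H →ₗ.[ℂ] H) : Prop :=
  ¬ IsBoundedOp A ∧ InftyPiPlusCond G A ⊤

/-- `∞` is a spectral point of negative type of `A`. -/
def sigmaMMInfty (G : H →L[ℂ] H) (A : H →ₗ.[ℂ] H) : Prop :=
  ¬ IsBoundedOp A ∧ InftyPiMinusCond G A ⊤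

/-- A subset of the Riemann sphere `ℂ̄ = ℂ ∪ {∞}` given by a condition at finite
points and a condition at `∞`. -/
def extSet (Pf : ℂ → Prop) (Pinf : Prop) : Set (OnePoint ℂ) :=
  {p | (∃ l : ℂ, p = (l : OnePoint ℂ) ∧ Pf l) ∨ (p = ∞ ∧ Pinf)}

/-- The extended approximate point spectrum `σ̃_ap(A) ⊆ ℂ̄`. -/
def extSigmaAp (A : H →ₗ.[ℂ] H) : Set (OnePoint ℂ) :=
  extSet (fun l => l ∈ sigmaAp A) (¬ IsBoundedOp A)

/-- The set `σ_{π+}(A) ⊆ ℂ̄`. -/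
def extPiPlus (G : H →L[ℂ] H) (A : H →ₗ.[ℂ] H) : Set (OnePoint ℂ) :=
  extSet (sigmaPiPlusAt G A) (sigmaPiPlusInfty G A)

/-- The set `σ_{π−}(A) ⊆ ℂ̄`. -/
def extPiMinus (G : H →L[ℂ] H) (A : H →ₗ.[ℂ] H) : Set (OnePoint ℂ) :=
  extSet (sigmaPiMinusAt G A) (sigmaPiMinusInfty G A)

/-- The set `σ_{++}(A) ⊆ ℂ̄`. -/
def extPP (G : H →L[ℂ] H) (A : H →ₗ.[ℂ] H) : Set (OnePoint ℂ) :=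
  extSet (sigmaPPAt G A) (sigmaPPInfty G A)

/-- The set `σ_{−−}(A) ⊆ ℂ̄`. -/
def extMM (G : H →L[ℂ] H) (A : H →ₗ.[ℂ] H) : Set (OnePoint ℂ) :=
  extSet (sigmaMMAt G A) (sigmaMMInfty G A)

/-- The extended set of points of regular type, `r̃(A) = ℂ̄ \ σ̃_ap(A)`. -/
def extReg (A : H →ₗ.[ℂ] H) : Set (OnePoint ℂ) := (extSigmaAp A)ᶜ

/-- `A` is `G`-symmetric: `[Ax,y] = [x,Ay]` for `x, y ∈ dom A`. -/
def GSymm (G : H →L[ℂ] H) (A : H →ₗ.[ℂ] H) : Prop :=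
  ∀ x y : A.domain, brk G (A x) (y : H) = brk G (x : H) (A y)

/-- A bounded operator `T` is `G`-symmetric (equivalently, `G`-selfadjoint):
`[Tx,y] = [x,Ty]` for all `x, y`. -/
def GSymmB (G T : H →L[ℂ] H) : Prop := ∀ x y : H, brk G (T x) y = brk G x (T y)

/-- `l ∈ ρ(A)`: the operator `A − l` maps `dom A` bijectively onto `H`
with a bounded inverse. -/
def InResolventSet (A : H →ₗ.[ℂ] H) (l : ℂ) : Prop :=
  (∀ y : H, ∃ x : A.domain, A x - l • (x : H) = y) ∧
  ∃ c : ℝ, 0 < c ∧ ∀ x : A.domain, c * ‖(x : H)‖ ≤ ‖A x - l • (x : H)‖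

/-- The spectrum `σ(A) = ℂ \ ρ(A)`. -/
def spectrumSet (A : H →ₗ.[ℂ] H) : Set ℂ := {l | ¬ InResolventSet A l}

/-- `ker (A − l)` as a submodule of `H`. -/
def kerAt (A : H →ₗ.[ℂ] H) (l : ℂ) : Submodule ℂ H where
  carrier := {x | ∃ hx : x ∈ A.domain, A ⟨x, hx⟩ = l • x}
  zero_mem' := ⟨A.domain.zero_mem, by
    have : (⟨(0 : H), A.domain.zero_mem⟩ : A.domain) = 0 := rfl
    rw [this, A.map_zero, smul_zero]⟩
  add_mem' := by
    rintro a b ⟨ha, ea⟩ ⟨hb, eb⟩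
    refine ⟨A.domain.add_mem ha hb, ?_⟩
    have : (⟨a + b, A.domain.add_mem ha hb⟩ : A.domain) = ⟨a, ha⟩ + ⟨b, hb⟩ := rfl
    rw [this, A.map_add, ea, eb, smul_add]
  smul_mem' := by
    rintro c x ⟨hx, ex⟩
    refine ⟨A.domain.smul_mem c hx, ?_⟩
    have : (⟨c • x, A.domain.smul_mem c hx⟩ : A.domain) = c • (⟨x, hx⟩ : A.domain) := rfl
    rw [this, A.map_smul, ex, smul_comm]

/-- The range of `A − l`. -/
def ranAt (A : H →ₗ.[ℂ] H) (l : ℂ) : Set H :=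
  {y | ∃ x : A.domain, A x - l • (x : H) = y}

/-- A uniformly positive subspace. -/
def IsUnifPos (G : H →L[ℂ] H) (L : Submodule ℂ H) : Prop :=
  ∃ δ : ℝ, 0 < δ ∧ ∀ x ∈ L, δ * ‖x‖ ^ 2 ≤ brkRe G x x

/-- A uniformly negative subspace. -/
def IsUnifNeg (G : H →L[ℂ] H) (L : Submodule ℂ H) : Prop :=
  ∃ δ : ℝ, 0 < δ ∧ ∀ x ∈ L, δ * ‖x‖ ^ 2 ≤ -brkRe G x x

/-- A positive set: every nonzero element `x` has `[x,x] > 0`. -/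
def IsPosSet (G : H →L[ℂ] H) (S : Set H) : Prop := ∀ x ∈ S, x ≠ 0 → 0 < brkRe G x x

/-- A negative set: every nonzero element `x` has `[x,x] < 0`. -/
def IsNegSet (G : H →L[ℂ] H) (S : Set H) : Prop := ∀ x ∈ S, x ≠ 0 → brkRe G x x < 0

/-- The orthogonal companion `L^{[⊥]}` of `L` with respect to `[·,·]`. -/
def orthCompanion (G : H →L[ℂ] H) (L : Submodule ℂ H) : Submodule ℂ H where
  carrier := {x | ∀ y ∈ L, brk G x y = 0}
  zero_mem' := by intro y hy; simp [brk]
  add_mem' := by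
    intro a b ha hb y hy
    simp only [brk, map_add, inner_add_left] at *
    rw [ha y hy, hb y hy, add_zero]
  smul_mem' := by
    intro c x hx y hy
    simp only [brk, _root_.map_smul, inner_smul_left] at *
    rw [hx y hy, mul_zero]

/-- The isotropic part `L° = L ∩ L^{[⊥]}` of `L`. -/
def isoPart (G : H →L[ℂ] H) (L : Submodule ℂ H) : Submodule ℂ H := L ⊓ orthCompanion G L

/-- A fundamental decomposition `L = L₊ [∔] L₋ [∔] L°` of `L`. -/
def IsFundDecomp (G : H →L[ℂ] H) (L Lp Lm L0 : Submodule ℂ H) : Prop :=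
  Lp ≤ L ∧ Lm ≤ L ∧ L0 = isoPart G L ∧
  IsPosSet G (Lp : Set H) ∧ IsNegSet G (Lm : Set H) ∧
  (∀ x ∈ Lp, ∀ y ∈ Lm, brk G x y = 0) ∧
  (∀ x ∈ L, ∃ p ∈ Lp, ∃ m ∈ Lm, ∃ z ∈ L0, x = p + m + z) ∧
  (∀ p ∈ Lp, ∀ m ∈ Lm, ∀ z ∈ L0, p + m + z = 0 → p = 0 ∧ m = 0 ∧ z = 0)

/-- A Jordan chain `x 0, …, x (n-1)` of `A` at `l` of length `n`. -/
def IsJordanChain (A : H →ₗ.[ℂ] H) (l : ℂ) (n : ℕ) (x : ℕ → A.domain) : Prop :=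
  0 < n ∧ (∀ i < n, (x i : H) ≠ 0) ∧ A (x 0) = l • ((x 0 : H)) ∧
  ∀ i, i + 1 < n → A (x (i + 1)) = l • ((x (i + 1) : H)) + (x i : H)

/-- A Jordan chain of `A` at `l` of infinite length. -/
def IsInfJordanChain (A : H →ₗ.[ℂ] H) (l : ℂ) (x : ℕ → A.domain) : Prop :=
  (∀ n, (x n : H) ≠ 0) ∧ A (x 0) = l • ((x 0 : H)) ∧
  ∀ n, A (x (n + 1)) = l • ((x (n + 1) : H)) + (x n : H)

/-- The algebraic eigenspace `L_λ(A) = ⋃ₙ ker (A − λ)ⁿ`. -/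
def algEig (A : H →ₗ.[ℂ] H) (l : ℂ) : Set H :=
  {x | ∃ n : ℕ, ∃ c : ℕ → H, c 0 = 0 ∧ c n = x ∧
    ∀ i < n, ∃ h : c (i + 1) ∈ A.domain, A ⟨c (i + 1), h⟩ = l • c (i + 1) + c i}

/-- The bounded operator `B` commutes with `A`, i.e. `BA ⊆ AB`. -/
def CommutesWith (B : H →L[ℂ] H) (A : H →ₗ.[ℂ] H) : Prop :=
  ∀ x : A.domain, ∃ h : B (x : H) ∈ A.domain, A ⟨B (x : H), h⟩ = B (A x)

/-- `R` is the (everywhere defined, bounded) resolvent of `A` at `μ`. -/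
def IsResolventOf (A : H →ₗ.[ℂ] H) (mu : ℂ) (R : H →L[ℂ] H) : Prop :=
  (∀ y : H, ∃ h : R y ∈ A.domain, A ⟨R y, h⟩ - mu • R y = y) ∧
  (∀ x : A.domain, R (A x - mu • (x : H)) = (x : H))

/-- The system `𝓜(I)` of all finite unions of bounded intervals whose closure
is contained in `I`. -/
def MSet (I : Set ℝ) : Set (Set ℝ) :=
  {D | ∃ F : Finset (Set ℝ),
    (∀ J ∈ F, J.OrdConnected ∧ Bornology.IsBounded J ∧ closure J ⊆ I) ∧ D = ⋃₀ ↑F}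

/-- The system `𝓜_S(I)`: elements of `𝓜(I)` whose boundary does not meet `S`. -/
def MSetS (I : Set ℝ) (S : Set ℝ) : Set (Set ℝ) :=
  {D | D ∈ MSet I ∧ frontier D ∩ S = ∅}

/-- `l` belongs to the resolvent set of the restriction `A|L` of `A`
to the (`A`-invariant) subspace `L`. -/
def InResolventRestr (A : H →ₗ.[ℂ] H) (L : Submodule ℂ H) (l : ℂ) : Prop :=
  (∀ x : A.domain, (x : H) ∈ L → A x - l • (x : H) ∈ L) ∧
  (∀ y ∈ L, ∃ x : A.domain, (x : H) ∈ L ∧ A x - l • (x : H) = y) ∧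
  ∃ c : ℝ, 0 < c ∧ ∀ x : A.domain, (x : H) ∈ L → c * ‖(x : H)‖ ≤ ‖A x - l • (x : H)‖

/-- The spectrum of the restriction `A|L`. -/
def specRestr (A : H →ₗ.[ℂ] H) (L : Submodule ℂ H) : Set ℂ :=
  {l | ¬ InResolventRestr A L l}

/-- The closure of `S ∩ dom A` with respect to the graph norm of `A`. -/
def graphClosure (A : H →ₗ.[ℂ] H) (S : Set H) : Set H :=
  {x | ∃ hx : x ∈ A.domain, ((x, A ⟨x, hx⟩) : H × H) ∈
    closure {p : H × H | ∃ hy : p.1 ∈ A.domain, p.1 ∈ S ∧ A ⟨p.1, hy⟩ = p.2}}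

/-- The sum `A + F` of `A` and a bounded operator `F`, with domain `dom A`. -/
def addCLM (A : H →ₗ.[ℂ] H) (F : H →L[ℂ] H) : H →ₗ.[ℂ] H :=
  ⟨A.domain, A.toFun + (F.toLinearMap.comp A.domain.subtype)⟩

/-- The composition `G ∘ A` as a partially defined operator with domain `dom A`. -/
def compCLM (G : H →L[ℂ] H) (A : H →ₗ.[ℂ] H) : H →ₗ.[ℂ] H :=
  ⟨A.domain, G.toLinearMap.comp A.toFun⟩

/-- A map `f` defined on `dom A` is `A`-compact: any sequence bounded in the graph
norm of `A` has a subsequence whose image under `f` converges. -/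
def IsACompact (A : H →ₗ.[ℂ] H) (f : A.domain → H) : Prop :=
  ∀ x : ℕ → A.domain, (∃ C : ℝ, ∀ n, ‖(x n : H)‖ + ‖A (x n)‖ ≤ C) →
    ∃ φ : ℕ → ℕ, StrictMono φ ∧ ∃ y : H, Tendsto (fun n => f (x (φ n))) atTop (𝓝 y)

/-- `(L, [·,·])` is a Hilbert space: `[·,·]` is positive definite on `L` and `L` is
complete with respect to the induced norm. -/
def IsHilbertWrt (G : H →L[ℂ] H) (L : Submodule ℂ H) : Prop :=
  IsPosSet G (L : Set H) ∧
  ∀ u : ℕ → H, (∀ n, u n ∈ L) →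
    (∀ ε : ℝ, 0 < ε → ∃ N, ∀ m ≥ N, ∀ n ≥ N, brkRe G (u m - u n) (u m - u n) < ε) →
    ∃ v ∈ L, Tendsto (fun n => brkRe G (u n - v) (u n - v)) atTop (𝓝 0)

/-- `(L, −[·,·])` is a Hilbert space. -/
def IsAntiHilbertWrt (G : H →L[ℂ] H) (L : Submodule ℂ H) : Prop :=
  IsNegSet G (L : Set H) ∧
  ∀ u : ℕ → H, (∀ n, u n ∈ L) →
    (∀ ε : ℝ, 0 < ε → ∃ N, ∀ m ≥ N, ∀ n ≥ N, -brkRe G (u m - u n) (u m - u n) < ε) →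
    ∃ v ∈ L, Tendsto (fun n => brkRe G (u n - v) (u n - v)) atTop (𝓝 0)


/-- The sequence `x` converges weakly to `0` in `H`. -/
def WeakNullSeq (x : ℕ → H) : Prop :=
  ∀ y : H, Tendsto (fun n => (inner ℂ y (x n) : ℂ)) atTop (𝓝 0)


section Statement4Aux

lemma abs_brkRe_le (G : H →L[ℂ] H) (x y : H) : |brkRe G x y| ≤ ‖G‖ * ‖x‖ * ‖y‖ := by
  have h1 : |brkRe G x y| ≤ ‖brk G x y‖ := by
    exact Complex.abs_re_le_norm _
  have h2 : ‖(inner ℂ (G x) y : ℂ)‖ ≤ ‖G x‖ * ‖y‖ := norm_inner_le_norm _ _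
  have h3 : ‖G x‖ * ‖y‖ ≤ ‖G‖ * ‖x‖ * ‖y‖ :=
    mul_le_mul_of_nonneg_right (G.le_opNorm x) (norm_nonneg y)
  exact h1.trans (h2.trans h3)

lemma brkRe_neg (G : H →L[ℂ] H) (x y : H) : brkRe (-G) x y = - brkRe G x y := by
  simp [brkRe, brk, inner_neg_left]

lemma brkRe_smul (G : H →L[ℂ] H) (c : ℂ) (x : H) :
    brkRe G (c • x) (c • x) = ‖c‖ ^ 2 * brkRe G x x := by
  simp only [brkRe, brk, _root_.map_smul, inner_smul_left, inner_smul_right, ← mul_assoc]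
  rw [mul_comm c ((starRingEnd ℂ) c), RCLike.conj_mul]
  norm_cast
  exact Complex.re_ofReal_mul _ _

lemma brkRe_diff (G : H →L[ℂ] H) (a b : H) :
    |brkRe G a a - brkRe G b b| ≤ ‖G‖ * (‖a‖ + ‖b‖) * ‖a - b‖ := by
  have key : brkRe G a a - brkRe G b b = brkRe G (a - b) a + brkRe G b (a - b) := by
    simp only [brkRe, brk, map_sub, inner_sub_left, inner_sub_right, Complex.sub_re,
      Complex.add_re]
    ring
  rw [key]
  have h1 := abs_brkRe_le G (a - b) a
  have h2 := abs_brkRe_le G b (a - b)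
  calc |brkRe G (a-b) a + brkRe G b (a-b)|
      ≤ |brkRe G (a-b) a| + |brkRe G b (a-b)| := abs_add_le _ _
    _ ≤ ‖G‖*‖a-b‖*‖a‖ + ‖G‖*‖b‖*‖a-b‖ := add_le_add h1 h2
    _ = ‖G‖ * (‖a‖+‖b‖) * ‖a-b‖ := by ring

lemma limsup_lt_zero_iff {f : ℕ → ℝ} {B : ℝ} (hB : ∀ n, |f n| ≤ B) :
    atTop.limsup f < 0 ↔ 0 < atTop.liminf (fun n => -f n) := by
  have hub : IsBoundedUnder (· ≤ ·) atTop f :=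
    isBoundedUnder_of ⟨B, fun n => (abs_le.1 (hB n)).2⟩
  have hlb' : IsBoundedUnder (· ≥ ·) atTop (fun n => -f n) :=
    isBoundedUnder_of ⟨-B, fun n => by
      have := (abs_le.1 (hB n)).2; show -B ≤ -f n; linarith⟩
  have hco' : IsCoboundedUnder (· ≥ ·) atTop (fun n => -f n) :=
    IsBoundedUnder.isCoboundedUnder_ge
      (isBoundedUnder_of ⟨B, fun n => by
        have := (abs_le.1 (hB n)).1; show -f n ≤ B; linarith⟩)
  have hcoF : IsCoboundedUnder (· ≤ ·) atTop f :=
    IsBoundedUnder.isCoboundedUnder_le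
      (isBoundedUnder_of ⟨-B, fun n => (abs_le.1 (hB n)).1⟩)
  constructor
  · intro h
    have h2 : atTop.limsup f < atTop.limsup f / 2 := by linarith
    have hev : ∀ᶠ n in atTop, f n < atTop.limsup f / 2 := eventually_lt_of_limsup_lt h2 hub
    have hle : -(atTop.limsup f) / 2 ≤ atTop.liminf (fun n => -f n) :=
      le_liminf_of_le hco' (hev.mono fun n hn => by linarith)
    linarith
  · intro h
    have h2 : atTop.liminf (fun n => -f n) / 2 < atTop.liminf (fun n => -f n) := by linarith
    have hev : ∀ᶠ n in atTop, atTop.liminf (fun n => -f n) / 2 < -f n :=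
      eventually_lt_of_lt_liminf h2 hlb'
    have hle : atTop.limsup f ≤ -(atTop.liminf (fun n => -f n)) / 2 :=
      limsup_le_of_le hcoF (hev.mono fun n hn => by linarith)
    linarith


lemma piPlus_stable (G : H →L[ℂ] H) (A : H →ₗ.[ℂ] H) (l : ℂ) (M : Submodule ℂ H)
    (hP : PiPlusCond G A l M) :
    ∃ ε : ℝ, 0 < ε ∧ ∀ l' : ℂ, ‖l' - l‖ < ε → PiPlusCond G A l' M := by
  by_contra hcon
  push_neg at hcon
  have hcon' : ∀ k : ℕ, ∃ l' : ℂ, ‖l' - l‖ < 1/((k:ℝ)+1) ∧ ¬ PiPlusCond G A l' M := by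
    intro k
    obtain ⟨l', h1, h2⟩ := hcon (1/((k:ℝ)+1)) (by positivity)
    exact ⟨l', h1, h2⟩
  choose lam hlam hbad using hcon'
  have hbad' : ∀ k : ℕ, ∃ x : ℕ → A.domain, (∀ n, ((x n : H)) ∈ M) ∧ IsApproxSeq A (lam k) x ∧
      atTop.liminf (fun n => brkRe G (x n) (x n)) ≤ 0 := by
    intro k
    have := hbad k
    simp only [PiPlusCond] at this
    push_neg at this
    exact this
  choose x hxM hxA hxL using hbad'
  have hsel : ∀ k : ℕ, ∃ n : ℕ, ‖A (x k n) - lam k • ((x k n : H))‖ < 1/((k:ℝ)+1) ∧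
      brkRe G (x k n) (x k n) < 1/((k:ℝ)+1) := by
    intro k
    have h1 : ∀ᶠ n in atTop, ‖A (x k n) - lam k • ((x k n : H))‖ < 1/((k:ℝ)+1) := by
      have ht := (hxA k).2
      rw [NormedAddCommGroup.tendsto_nhds_zero] at ht
      exact ht _ (by positivity)
    have hco : IsCoboundedUnder (· ≥ ·) atTop (fun n => brkRe G (x k n) (x k n)) := by
      refine IsBoundedUnder.isCoboundedUnder_ge (isBoundedUnder_of ⟨‖G‖, fun n => ?_⟩)
      have hb := abs_brkRe_le G ((x k n : H)) ((x k n : H))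
      rw [(hxA k).1 n] at hb
      have := (abs_le.1 hb).2
      linarith
    have h2 : ∃ᶠ n in atTop, brkRe G (x k n) (x k n) < 1/((k:ℝ)+1) :=
      frequently_lt_of_liminf_lt hco (lt_of_le_of_lt (hxL k) (by positivity))
    exact ((h2.and_eventually h1).exists).imp fun n hn => ⟨hn.2, hn.1⟩
  choose nsel hAn hBr using hsel
  set y : ℕ → A.domain := fun k => x k (nsel k) with hy
  have hy1 : ∀ k, ‖((y k : H))‖ = 1 := fun k => (hxA k).1 (nsel k)
  have hyA : IsApproxSeq A l y := by
    refine ⟨hy1, ?_⟩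
    have hb : ∀ k : ℕ, ‖A (y k) - l • ((y k : H))‖ ≤ 2 * (1/((k:ℝ)+1)) := by
      intro k
      have he : A (y k) - l • ((y k : H)) =
          (A (y k) - lam k • ((y k : H))) + (lam k - l) • ((y k : H)) := by
        rw [sub_smul]; abel
      rw [he]
      have h1 := hAn k
      have h2 : ‖(lam k - l) • ((y k : H))‖ ≤ 1/((k:ℝ)+1) := by
        rw [norm_smul, hy1, mul_one]
        exact le_of_lt (hlam k)
      calc ‖(A (y k) - lam k • ((y k : H))) + (lam k - l) • ((y k : H))‖
          ≤ ‖A (y k) - lam k • ((y k : H))‖ + ‖(lam k - l) • ((y k : H))‖ := norm_add_le _ _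
        _ ≤ 1/((k:ℝ)+1) + 1/((k:ℝ)+1) := add_le_add (le_of_lt h1) h2
        _ = 2 * (1/((k:ℝ)+1)) := by ring
    refine squeeze_zero_norm hb ?_
    simpa using tendsto_one_div_add_atTop_nhds_zero_nat.const_mul (2:ℝ)
  have hpos := hP y (fun k => hxM k (nsel k)) hyA
  have hle : atTop.liminf (fun k => brkRe G (y k) (y k)) ≤ 0 := by
    have hbd : IsBoundedUnder (· ≥ ·) atTop (fun k => brkRe G (y k) (y k)) := by
      refine isBoundedUnder_of ⟨-‖G‖, fun k => ?_⟩
      have hb := abs_brkRe_le G ((y k : H)) ((y k : H))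
      rw [hy1 k] at hb
      have := (abs_le.1 hb).1
      show -‖G‖ ≤ _
      linarith
    have hco : IsCoboundedUnder (· ≥ ·) atTop (fun k : ℕ => 1/((k:ℝ)+1)) :=
      IsBoundedUnder.isCoboundedUnder_ge (isBoundedUnder_of ⟨1, fun k => by
        rw [div_le_one (by positivity)]; linarith [Nat.cast_nonneg (α := ℝ) k]⟩)
    have h1 : atTop.liminf (fun k => brkRe G (y k) (y k)) ≤
        atTop.liminf (fun k : ℕ => 1/((k:ℝ)+1)) :=
      liminf_le_liminf (Eventually.of_forall fun k => le_of_lt (hBr k)) hbd hco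
    have h2 : atTop.liminf (fun k : ℕ => 1/((k:ℝ)+1)) = 0 :=
      tendsto_one_div_add_atTop_nhds_zero_nat.liminf_eq
    linarith
  linarith

set_option maxHeartbeats 1000000 in
lemma inftyPiPlus_stable (G : H →L[ℂ] H) (A : H →ₗ.[ℂ] H) (M : Submodule ℂ H)
    (hP : InftyPiPlusCond G A M) :
    ∃ r : ℝ, ∀ l' : ℂ, r < ‖l'‖ → PiPlusCond G A l' M := by
  by_contra hcon
  push_neg at hcon
  have hcon' : ∀ k : ℕ, ∃ l' : ℂ, ((k:ℝ)+2) < ‖l'‖ ∧ ¬ PiPlusCond G A l' M := fun k => hcon _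
  choose lam hlam hbad using hcon'
  have hbad' : ∀ k : ℕ, ∃ x : ℕ → A.domain, (∀ n, ((x n : H)) ∈ M) ∧ IsApproxSeq A (lam k) x ∧
      atTop.liminf (fun n => brkRe G (x n) (x n)) ≤ 0 := by
    intro k
    have := hbad k
    simp only [PiPlusCond] at this
    push_neg at this
    exact this
  choose x hxM hxA hxL using hbad'
  have hsel : ∀ k : ℕ, ∃ n : ℕ, ‖A (x k n) - lam k • ((x k n : H))‖ < 1/((k:ℝ)+1) ∧
      brkRe G (x k n) (x k n) < 1/((k:ℝ)+1) := by
    intro k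
    have h1 : ∀ᶠ n in atTop, ‖A (x k n) - lam k • ((x k n : H))‖ < 1/((k:ℝ)+1) := by
      have ht := (hxA k).2
      rw [NormedAddCommGroup.tendsto_nhds_zero] at ht
      exact ht _ (by positivity)
    have hco : IsCoboundedUnder (· ≥ ·) atTop (fun n => brkRe G (x k n) (x k n)) := by
      refine IsBoundedUnder.isCoboundedUnder_ge (isBoundedUnder_of ⟨‖G‖, fun n => ?_⟩)
      have hb := abs_brkRe_le G ((x k n : H)) ((x k n : H))
      rw [(hxA k).1 n] at hb
      have := (abs_le.1 hb).2
      linarith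
    have h2 : ∃ᶠ n in atTop, brkRe G (x k n) (x k n) < 1/((k:ℝ)+1) :=
      frequently_lt_of_liminf_lt hco (lt_of_le_of_lt (hxL k) (by positivity))
    exact ((h2.and_eventually h1).exists).imp fun n hn => ⟨hn.2, hn.1⟩
  choose nsel hAn hBr using hsel
  set u : ℕ → A.domain := fun k => x k (nsel k) with hu
  have hu1 : ∀ k, ‖((u k : H))‖ = 1 := fun k => (hxA k).1 (nsel k)
  have hrk : ∀ k : ℕ, ‖A (u k) - lam k • ((u k : H))‖ ≤ 1 := by
    intro k
    refine (le_of_lt (hAn k)).trans ?_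
    rw [div_le_one (by positivity)]
    linarith [Nat.cast_nonneg (α := ℝ) k]
  have hlamnorm : ∀ k, ‖lam k • ((u k : H))‖ = ‖lam k‖ := by
    intro k; rw [norm_smul, hu1, mul_one]
  have haL : ∀ k, ‖lam k‖ - 1 ≤ ‖A (u k)‖ := by
    intro k
    have h1 : ‖lam k • ((u k : H))‖ - ‖A (u k)‖ ≤ ‖lam k • ((u k : H)) - A (u k)‖ :=
      norm_sub_norm_le _ _
    rw [norm_sub_rev] at h1
    rw [hlamnorm k] at h1
    linarith [hrk k]
  have halow : ∀ k : ℕ, (k:ℝ)+1 ≤ ‖A (u k)‖ := by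
    intro k
    have := haL k
    have := hlam k
    linarith
  have hapos : ∀ k, 0 < ‖A (u k)‖ := by
    intro k
    have := halow k
    have : (0:ℝ) < (k:ℝ)+1 := by positivity
    linarith [halow k]
  set y : ℕ → A.domain := fun k => ((‖A (u k)‖⁻¹ : ℝ) : ℂ) • u k with hyd
  have hyA : ∀ k, A (y k) = ((‖A (u k)‖⁻¹ : ℝ) : ℂ) • A (u k) := fun k => A.map_smul _ _
  have hy1 : ∀ k, ‖A (y k)‖ = 1 := by
    intro k
    rw [hyA k, norm_smul, Complex.norm_real, Real.norm_eq_abs,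
      abs_of_nonneg (inv_nonneg.2 (norm_nonneg _))]
    exact inv_mul_cancel₀ (ne_of_gt (hapos k))
  have hynorm : ∀ k : ℕ, ‖((y k : H))‖ ≤ 1/((k:ℝ)+1) := by
    intro k
    show ‖((‖A (u k)‖⁻¹ : ℝ) : ℂ) • ((u k : H))‖ ≤ 1/((k:ℝ)+1)
    rw [norm_smul, hu1, mul_one, Complex.norm_real, Real.norm_eq_abs,
      abs_of_nonneg (inv_nonneg.2 (norm_nonneg _)), one_div]
    exact inv_anti₀ (by positivity) (halow k)
  have hy0 : Tendsto (fun k => ((y k : H))) atTop (𝓝 0) :=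
    squeeze_zero_norm hynorm tendsto_one_div_add_atTop_nhds_zero_nat
  have hyM : ∀ k, ((y k : H)) ∈ M := by
    intro k
    show (((((‖A (u k)‖⁻¹ : ℝ) : ℂ) • u k : A.domain)) : H) ∈ M
    rw [Submodule.coe_smul]
    exact M.smul_mem _ (hxM k (nsel k))
  have hpos := hP y hyM ⟨hy1, hy0⟩
  have hbound : ∀ k : ℕ, brkRe G (A (y k)) (A (y k)) ≤ (4 + 3*‖G‖) * (1/((k:ℝ)+1)) := by
    intro k
    have hGnn : (0:ℝ) ≤ ‖G‖ := norm_nonneg _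
    have hk1 : (0:ℝ) < (k:ℝ)+1 := by positivity
    have hk0 : (0:ℝ) ≤ (k:ℝ) := Nat.cast_nonneg k
    have hL2 : (2:ℝ) ≤ ‖lam k‖ := by have := hlam k; linarith
    have hN1 : (1:ℝ) ≤ ‖A (u k)‖ := by have := halow k; linarith
    have hNL : ‖lam k‖ - 1 ≤ ‖A (u k)‖ := haL k
    have e1 : brkRe G (A (y k)) (A (y k)) = brkRe G (A (u k)) (A (u k)) / ‖A (u k)‖^2 := by
      rw [hyA k, brkRe_smul, Complex.norm_real, Real.norm_eq_abs,
        abs_of_nonneg (inv_nonneg.2 (norm_nonneg _))]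
      rw [div_eq_inv_mul, ← inv_pow]
    rw [e1]
    have hdiff := brkRe_diff G (A (u k)) (lam k • ((u k : H)))
    rw [brkRe_smul, hlamnorm k] at hdiff
    have hd2 : brkRe G (A (u k)) (A (u k)) - ‖lam k‖^2 * brkRe G ((u k : H)) ((u k : H)) ≤
        ‖G‖ * (‖A (u k)‖ + ‖lam k‖) * (1/((k:ℝ)+1)) := by
      have h1 := (abs_le.1 hdiff).2
      have h2 : ‖G‖ * (‖A (u k)‖ + ‖lam k‖) * ‖A (u k) - lam k • ((u k : H))‖ ≤
          ‖G‖ * (‖A (u k)‖ + ‖lam k‖) * (1/((k:ℝ)+1)) := by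
        refine mul_le_mul_of_nonneg_left (le_of_lt (hAn k)) ?_
        have : (0:ℝ) ≤ ‖A (u k)‖ + ‖lam k‖ := by linarith
        positivity
      linarith
    have hbru : brkRe G ((u k : H)) ((u k : H)) ≤ 1/((k:ℝ)+1) := le_of_lt (hBr k)
    have hBq : brkRe G (A (u k)) (A (u k)) ≤
        (‖lam k‖^2 + ‖G‖*(‖A (u k)‖ + ‖lam k‖)) * (1/((k:ℝ)+1)) := by
      have h3 : ‖lam k‖^2 * brkRe G ((u k : H)) ((u k : H)) ≤ ‖lam k‖^2 * (1/((k:ℝ)+1)) :=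
        mul_le_mul_of_nonneg_left hbru (sq_nonneg _)
      nlinarith [hd2]
    have ha2b : ‖lam k‖ ≤ 2*‖A (u k)‖ := by linarith
    have hasq : ‖lam k‖^2 ≤ (2*‖A (u k)‖)^2 := pow_le_pow_left₀ (norm_nonneg _) ha2b 2
    have hbb : ‖A (u k)‖ ≤ ‖A (u k)‖^2 := by
      calc ‖A (u k)‖ = ‖A (u k)‖^1 := (pow_one _).symm
        _ ≤ ‖A (u k)‖^2 := pow_le_pow_right₀ hN1 (by norm_num)
    have hgb : ‖G‖*‖A (u k)‖ ≤ ‖G‖*‖A (u k)‖^2 := mul_le_mul_of_nonneg_left hbb hGnn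
    have hga : ‖G‖*‖lam k‖ ≤ ‖G‖*(2*‖A (u k)‖) := mul_le_mul_of_nonneg_left ha2b hGnn
    have hcoef : ‖lam k‖^2 + ‖G‖*(‖A (u k)‖ + ‖lam k‖) ≤ (4 + 3*‖G‖) * ‖A (u k)‖^2 := by
      have hexp : ‖G‖*(‖A (u k)‖ + ‖lam k‖) = ‖G‖*‖A (u k)‖ + ‖G‖*‖lam k‖ := by ring
      have hexp2 : (4 + 3*‖G‖) * ‖A (u k)‖^2 = 4*‖A (u k)‖^2 + 3*(‖G‖*‖A (u k)‖^2) := by ring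
      have heq : (2*‖A (u k)‖)^2 = 4*‖A (u k)‖^2 := by ring
      have hexp3 : ‖G‖*(2*‖A (u k)‖) = 2*(‖G‖*‖A (u k)‖) := by ring
      linarith
    rw [div_le_iff₀ (by positivity : (0:ℝ) < ‖A (u k)‖^2)]
    calc brkRe G (A (u k)) (A (u k))
        ≤ (‖lam k‖^2 + ‖G‖*(‖A (u k)‖ + ‖lam k‖)) * (1/((k:ℝ)+1)) := hBq
      _ ≤ ((4 + 3*‖G‖) * ‖A (u k)‖^2) * (1/((k:ℝ)+1)) :=
          mul_le_mul_of_nonneg_right hcoef (by positivity)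
      _ = (4 + 3*‖G‖) * (1/((k:ℝ)+1)) * ‖A (u k)‖^2 := by ring
  have hle : atTop.liminf (fun k => brkRe G (A (y k)) (A (y k))) ≤ 0 := by
    have hbd : IsBoundedUnder (· ≥ ·) atTop (fun k => brkRe G (A (y k)) (A (y k))) := by
      refine isBoundedUnder_of ⟨-‖G‖, fun k => ?_⟩
      have hb := abs_brkRe_le G (A (y k)) (A (y k))
      rw [hy1 k] at hb
      have := (abs_le.1 hb).1
      show -‖G‖ ≤ _
      linarith
    have hco : IsCoboundedUnder (· ≥ ·) atTop (fun k : ℕ => (4 + 3*‖G‖) * (1/((k:ℝ)+1))) := by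
      refine IsBoundedUnder.isCoboundedUnder_ge (isBoundedUnder_of ⟨4 + 3*‖G‖, fun k => ?_⟩)
      have h1 : (1:ℝ)/((k:ℝ)+1) ≤ 1 := by
        rw [div_le_one (by positivity)]; linarith [Nat.cast_nonneg (α := ℝ) k]
      have h2 : (0:ℝ) ≤ 4 + 3*‖G‖ := by positivity
      nlinarith
    have h1 : atTop.liminf (fun k => brkRe G (A (y k)) (A (y k))) ≤
        atTop.liminf (fun k : ℕ => (4 + 3*‖G‖) * (1/((k:ℝ)+1))) :=
      liminf_le_liminf (Eventually.of_forall hbound) hbd hco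
    have h2 : atTop.liminf (fun k : ℕ => (4 + 3*‖G‖) * (1/((k:ℝ)+1))) = 0 := by
      have ht : Tendsto (fun k : ℕ => (4 + 3*‖G‖) * (1/((k:ℝ)+1))) atTop (𝓝 0) := by
        simpa using tendsto_one_div_add_atTop_nhds_zero_nat.const_mul (4 + 3*‖G‖)
      exact ht.liminf_eq
    linarith
  linarith

lemma piMinus_iff_plus_neg (G : H →L[ℂ] H) (A : H →ₗ.[ℂ] H) (l : ℂ) (M : Submodule ℂ H) :
    PiMinusCond G A l M ↔ PiPlusCond (-G) A l M := by
  unfold PiMinusCond PiPlusCond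
  refine forall_congr' fun x => imp_congr_right fun hxM => imp_congr_right fun hxA => ?_
  have hB : ∀ n, |brkRe G ((x n : H)) ((x n : H))| ≤ ‖G‖ := by
    intro n
    have hb := abs_brkRe_le G ((x n : H)) ((x n : H))
    rw [hxA.1 n] at hb
    linarith
  have hiff := limsup_lt_zero_iff hB
  have he : (fun n => brkRe (-G) ((x n : H)) ((x n : H))) =
      fun n => -(brkRe G ((x n : H)) ((x n : H))) := by
    funext n; exact brkRe_neg G _ _
  rw [he]
  exact hiff

lemma inftyPiMinus_iff_plus_neg (G : H →L[ℂ] H) (A : H →ₗ.[ℂ] H) (M : Submodule ℂ H) :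
    InftyPiMinusCond G A M ↔ InftyPiPlusCond (-G) A M := by
  unfold InftyPiMinusCond InftyPiPlusCond
  refine forall_congr' fun x => imp_congr_right fun hxM => imp_congr_right fun hxA => ?_
  have hB : ∀ n, |brkRe G (A (x n)) (A (x n))| ≤ ‖G‖ := by
    intro n
    have hb := abs_brkRe_le G (A (x n)) (A (x n))
    rw [hxA.1 n] at hb
    linarith
  have hiff := limsup_lt_zero_iff hB
  have he : (fun n => brkRe (-G) (A (x n)) (A (x n))) =
      fun n => -(brkRe G (A (x n)) (A (x n))) := by
    funext n; exact brkRe_neg G _ _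
  rw [he]
  exact hiff

lemma extPiMinus_eq (G : H →L[ℂ] H) (A : H →ₗ.[ℂ] H) :
    extPiMinus G A = extPiPlus (-G) A := by
  have h1 : ∀ l : ℂ, sigmaPiMinusAt G A l ↔ sigmaPiPlusAt (-G) A l := by
    intro l
    unfold sigmaPiMinusAt sigmaPiPlusAt
    exact and_congr_right fun _ => exists_congr fun M =>
      and_congr_right fun _ => piMinus_iff_plus_neg G A l M
  have h2 : sigmaPiMinusInfty G A ↔ sigmaPiPlusInfty (-G) A := by
    unfold sigmaPiMinusInfty sigmaPiPlusInfty
    exact and_congr_right fun _ => exists_congr fun M =>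
      and_congr_right fun _ => inftyPiMinus_iff_plus_neg G A M
  unfold extPiMinus extPiPlus extSet
  ext p
  simp only [mem_setOf_eq, h1, h2]

lemma extMM_eq (G : H →L[ℂ] H) (A : H →ₗ.[ℂ] H) :
    extMM G A = extPP (-G) A := by
  have h1 : ∀ l : ℂ, sigmaMMAt G A l ↔ sigmaPPAt (-G) A l := by
    intro l
    unfold sigmaMMAt sigmaPPAt
    exact and_congr_right fun _ => piMinus_iff_plus_neg G A l ⊤
  have h2 : sigmaMMInfty G A ↔ sigmaPPInfty (-G) A := by
    unfold sigmaMMInfty sigmaPPInfty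
    exact and_congr_right fun _ => inftyPiMinus_iff_plus_neg G A ⊤
  unfold extMM extPP extSet
  ext p
  simp only [mem_setOf_eq, h1, h2]

lemma relOpen_of_nbhd {X : Type*} [TopologicalSpace X] {S T : Set X} (hST : S ⊆ T)
    (h : ∀ p ∈ S, ∃ U : Set X, IsOpen U ∧ p ∈ U ∧ U ∩ T ⊆ S) :
    ∃ V : Set X, IsOpen V ∧ S = V ∩ T := by
  choose U hUo hpU hUs using h
  refine ⟨⋃ (p : S), U p p.2, isOpen_iUnion fun p => hUo p p.2, ?_⟩
  ext q
  constructor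
  · intro hq
    exact ⟨mem_iUnion.2 ⟨⟨q, hq⟩, hpU q hq⟩, hST hq⟩
  · rintro ⟨hq1, hq2⟩
    obtain ⟨p, hp⟩ := mem_iUnion.1 hq1
    exact hUs p p.2 ⟨hp, hq2⟩

theorem extPiPlus_isRelOpen (G : H →L[ℂ] H) (A : H →ₗ.[ℂ] H) :
    ∃ V : Set (OnePoint ℂ), IsOpen V ∧ extPiPlus G A = V ∩ extSigmaAp A := by
  apply relOpen_of_nbhd
  · rintro p (⟨l, rfl, hl⟩ | ⟨rfl, hinf⟩)
    · exact Or.inl ⟨l, rfl, hl.1⟩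
    · exact Or.inr ⟨rfl, hinf.1⟩
  · rintro p (⟨l, rfl, hap, M, hMc, hMp⟩ | ⟨rfl, hnb, M, hMc, hMp⟩)
    · obtain ⟨ε, hε, hst⟩ := piPlus_stable G A l M hMp
      refine ⟨(↑) '' Metric.ball l ε, isOpen_image_coe.2 Metric.isOpen_ball,
        ⟨l, Metric.mem_ball_self hε, rfl⟩, ?_⟩
      rintro q ⟨⟨l', hl', rfl⟩, hq⟩
      rcases hq with ⟨l'', heq, hap'⟩ | ⟨heq, _⟩
      · have hll : l' = l'' := OnePoint.coe_injective heq
        subst hll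
        refine Or.inl ⟨l', rfl, hap', M, hMc, hst l' ?_⟩
        rw [← dist_eq_norm]
        exact Metric.mem_ball.1 hl'
      · exact absurd heq (OnePoint.coe_ne_infty l')
    · obtain ⟨r, hst⟩ := inftyPiPlus_stable G A M hMp
      refine ⟨((↑) '' Metric.closedBall (0:ℂ) r)ᶜ,
        isOpen_compl_image_coe.2 ⟨Metric.isClosed_closedBall, isCompact_closedBall _ _⟩,
        fun h => infty_notMem_image_coe h, ?_⟩
      rintro q ⟨hqU, hq⟩
      rcases hq with ⟨l', rfl, hap'⟩ | ⟨rfl, hnb'⟩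
      · have hr : r < ‖l'‖ := by
          by_contra hle
          push_neg at hle
          refine hqU ⟨l', ?_, rfl⟩
          rw [Metric.mem_closedBall, dist_zero_right]
          exact hle
        exact Or.inl ⟨l', rfl, hap', M, hMc, hst l' hr⟩
      · exact Or.inr ⟨rfl, hnb, M, hMc, hMp⟩

theorem extPP_isRelOpen (G : H →L[ℂ] H) (A : H →ₗ.[ℂ] H) :
    ∃ V : Set (OnePoint ℂ), IsOpen V ∧ extPP G A = V ∩ extSigmaAp A := by
  apply relOpen_of_nbhd
  · rintro p (⟨l, rfl, hl⟩ | ⟨rfl, hinf⟩)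
    · exact Or.inl ⟨l, rfl, hl.1⟩
    · exact Or.inr ⟨rfl, hinf.1⟩
  · rintro p (⟨l, rfl, hap, hMp⟩ | ⟨rfl, hnb, hMp⟩)
    · obtain ⟨ε, hε, hst⟩ := piPlus_stable G A l ⊤ hMp
      refine ⟨(↑) '' Metric.ball l ε, isOpen_image_coe.2 Metric.isOpen_ball,
        ⟨l, Metric.mem_ball_self hε, rfl⟩, ?_⟩
      rintro q ⟨⟨l', hl', rfl⟩, hq⟩
      rcases hq with ⟨l'', heq, hap'⟩ | ⟨heq, _⟩
      · have hll : l' = l'' := OnePoint.coe_injective heq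
        subst hll
        refine Or.inl ⟨l', rfl, hap', hst l' ?_⟩
        rw [← dist_eq_norm]
        exact Metric.mem_ball.1 hl'
      · exact absurd heq (OnePoint.coe_ne_infty l')
    · obtain ⟨r, hst⟩ := inftyPiPlus_stable G A ⊤ hMp
      refine ⟨((↑) '' Metric.closedBall (0:ℂ) r)ᶜ,
        isOpen_compl_image_coe.2 ⟨Metric.isClosed_closedBall, isCompact_closedBall _ _⟩,
        fun h => infty_notMem_image_coe h, ?_⟩
      rintro q ⟨hqU, hq⟩
      rcases hq with ⟨l', rfl, hap'⟩ | ⟨rfl, hnb'⟩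
      · have hr : r < ‖l'‖ := by
          by_contra hle
          push_neg at hle
          refine hqU ⟨l', ?_, rfl⟩
          rw [Metric.mem_closedBall, dist_zero_right]
          exact hle
        exact Or.inl ⟨l', rfl, hap', hst l' hr⟩
      · exact Or.inr ⟨rfl, hnb, hMp⟩

end Statement4Aux

/-- The sets `σ_{π+}(A)`, `σ_{π−}(A)`, `σ_{++}(A)` and `σ_{−−}(A)` are
relatively open in the extended approximate point spectrum `σ̃_ap(A) ⊆ ℂ̄`. -/
theorem statement_4 [CompleteSpace H] (G : H →L[ℂ] H) (hG : IsSelfAdjoint G)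
    (A : H →ₗ.[ℂ] H) (hAc : A.IsClosed) (hAd : Dense (A.domain : Set H)) :
    (∃ V : Set (OnePoint ℂ), IsOpen V ∧ extPiPlus G A = V ∩ extSigmaAp A) ∧
    (∃ V : Set (OnePoint ℂ), IsOpen V ∧ extPiMinus G A = V ∩ extSigmaAp A) ∧
    (∃ V : Set (OnePoint ℂ), IsOpen V ∧ extPP G A = V ∩ extSigmaAp A) ∧
    (∃ V : Set (OnePoint ℂ), IsOpen V ∧ extMM G A = V ∩ extSigmaAp A) := by
  refine ⟨extPiPlus_isRelOpen G A, ?_, extPP_isRelOpen G A, ?_⟩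
  · rw [extPiMinus_eq]
    exact extPiPlus_isRelOpen (-G) A
  · rw [extMM_eq]
    exact extPP_isRelOpen (-G) A

end Paper
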